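/- arXiv:1611.06626 — 2 statements merged into one kernel-verified Lean document; each statement's English description precedes it below -/
import Mathlib

section
/- A minimal valid function π is a facet if and only if for every minimal valid function π', the inclusion E(π) ⊆ E(π') implies π' = π. -/
/-!
Lowering a minimal valid function `π` to a constant `c` on one residue class `x + ℤ` keeps it
valid as long as every feasible point that uses this class `m ≥ 1` times still has weight at
least `1`; minimality therefore bounds `π x` by every such `c`. Taking for `c` the weight
`∑ π sᵢ` of any multiset with `∑ sᵢ ≡ x` shows that `π` is subadditive, vanishes at `0` and
equals `1` on `f + ℤ`. Taking `c = (k - 1 + π (f - k (f - x))) / k` for `k ≥ 2` gives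
`k π x ≤ k - 1 + π (f - k (f - x))` for all `k`, which is exactly what makes `c = 1 - π x`
admissible at `f - x`; hence `π x + π (f - x) = 1`.

Symmetry puts the points `{x, f - x}` and, for `(u, v) ∈ E(π)`, `{u, v, f - u - v}` into `P(π)`.
Hence a valid `π'` with `P(π) ⊆ P(π')` is symmetric, so minimal, and satisfies
`E(π) ⊆ E(π')`. Conversely, along any `y ∈ P(π)` every partial sum is an additive step of `π`,
so `E(π) ⊆ E(π')` transfers the equality `∑ π' = π' (∑ r y(r)) = 1`, i.e. `P(π) ⊆ P(π')`.
-/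

/-- A finite-support function `y : ℝ → ℕ` is feasible if `∑ r, r·y(r) − f ∈ ℤ`. -/
def Feasible (f : ℝ) (y : ℝ →₀ ℕ) : Prop :=
  ∃ z : ℤ, (∑ r ∈ y.support, r * (y r : ℝ)) - f = (z : ℝ)

/-- `π` is a valid function: nonnegative, and `∑ r, π(r)·y(r) ≥ 1` for every feasible `y`. -/
def Valid (f : ℝ) (π : ℝ → ℝ) : Prop :=
  (∀ x, 0 ≤ π x) ∧
    ∀ y : ℝ →₀ ℕ, Feasible f y → 1 ≤ ∑ r ∈ y.support, π r * (y r : ℝ)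

/-- A valid function is minimal if no other valid function is pointwise ≤ it. -/
def MinimalValid (f : ℝ) (π : ℝ → ℝ) : Prop :=
  Valid f π ∧ ¬ ∃ π' : ℝ → ℝ, Valid f π' ∧ (∀ x, π' x ≤ π x) ∧ π' ≠ π

/-- `P(π)`: the set of feasible `y` with `∑ r, π(r)·y(r) = 1`. -/
def Pset (f : ℝ) (π : ℝ → ℝ) : Set (ℝ →₀ ℕ) :=
  {y | Feasible f y ∧ ∑ r ∈ y.support, π r * (y r : ℝ) = 1}

/-- `E(π) = {(x,y) : π(x) + π(y) = π(x+y)}`. -/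
def Eset (π : ℝ → ℝ) : Set (ℝ × ℝ) :=
  {p | π p.1 + π p.2 = π (p.1 + p.2)}

/-- A valid function `π` is a facet if every valid `π'` with `P(π) ⊆ P(π')` equals `π`. -/
def IsFacet (f : ℝ) (π : ℝ → ℝ) : Prop :=
  Valid f π ∧ ∀ π' : ℝ → ℝ, Valid f π' → Pset f π ⊆ Pset f π' → π' = π

/-- A valid function `π` is a weak facet if every valid `π'` with `P(π) ⊆ P(π')`
has `P(π) = P(π')`. -/
def IsWeakFacet (f : ℝ) (π : ℝ → ℝ) : Prop :=
  Valid f π ∧ ∀ π' : ℝ → ℝ, Valid f π' → Pset f π ⊆ Pset f π' → Pset f π = Pset f π'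

/-- A valid function `π` is extreme if whenever `π = (π¹ + π²)/2` with `π¹, π²` valid,
then `π¹ = π² = π`. -/
def ExtremeFunc (f : ℝ) (π : ℝ → ℝ) : Prop :=
  Valid f π ∧ ∀ π₁ π₂ : ℝ → ℝ, Valid f π₁ → Valid f π₂ →
    (∀ x, π x = (π₁ x + π₂ x) / 2) → π₁ = π ∧ π₂ = π

/-- `π` is piecewise linear: there is a closed, discrete set `B ⊆ ℝ` of breakpoints
such that `π` is affine on each connected component of `ℝ \ B`. -/
def PiecewiseLinear (π : ℝ → ℝ) : Prop :=
  ∃ B : Set ℝ, IsClosed B ∧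
    (∀ x ∈ B, ∃ ε > (0 : ℝ), ∀ y ∈ B, |y - x| < ε → y = x) ∧
    (∀ x ∉ B, ∃ a b : ℝ, ∀ z ∈ connectedComponentIn Bᶜ x, π z = a * z + b)

/-- `π` is continuous piecewise linear. -/
def ContPiecewiseLinear (π : ℝ → ℝ) : Prop :=
  PiecewiseLinear π ∧ Continuous π

open AddCommGroup

theorem Multiset.sum_modEq_card_nsmul {M : Type*} [AddCommMonoid M] {p x : M} {t : Multiset M}
    (ht : ∀ u ∈ t, u ≡ x [PMOD p]) :
    t.sum ≡ t.card • x [PMOD p] := by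
  induction t using Multiset.induction with
  | empty => simp
  | cons a t ih =>
    simp only [Multiset.mem_cons, forall_eq_or_imp] at ht
    rw [Multiset.sum_cons, Multiset.card_cons, succ_nsmul']
    exact ht.1.add (ih ht.2)

theorem sum_support_mul_eq_sum_map (g : ℝ → ℝ) (y : ℝ →₀ ℕ) :
    ∑ r ∈ y.support, g r * (y r : ℝ) = (y.toMultiset.map g).sum := by
  rw [Finsupp.toMultiset_map, Finsupp.sum_toMultiset,
    Finsupp.sum_mapDomain_index (h := fun a n => n • a) (fun _ => zero_nsmul _)
      (fun _ _ _ => add_nsmul _ _ _)]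
  simp only [Finsupp.sum, nsmul_eq_mul, mul_comm]

theorem feasible_iff_sum_toMultiset_modEq {f : ℝ} {y : ℝ →₀ ℕ} :
    Feasible f y ↔ y.toMultiset.sum ≡ f [PMOD 1] := by
  rw [modEq_comm, modEq_iff_zsmul', Feasible, ← Multiset.map_id y.toMultiset,
    ← sum_support_mul_eq_sum_map]
  simp only [id, zsmul_one]

section

variable {f : ℝ} {π : ℝ → ℝ}

theorem valid_iff_multiset :
    Valid f π ↔ (∀ x, 0 ≤ π x) ∧ ∀ s : Multiset ℝ, s.sum ≡ f [PMOD 1] → 1 ≤ (s.map π).sum := by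
  refine and_congr_right fun _ => ⟨fun h s hs => ?_, fun h y hy => ?_⟩
  · have := h s.toFinsupp
    rw [feasible_iff_sum_toMultiset_modEq, sum_support_mul_eq_sum_map,
      Multiset.toFinsupp_toMultiset] at this
    exact this hs
  · rw [sum_support_mul_eq_sum_map]
    exact h _ (feasible_iff_sum_toMultiset_modEq.1 hy)

theorem Valid.one_le_sum_map (hπ : Valid f π) {s : Multiset ℝ} (hs : s.sum ≡ f [PMOD 1]) :
    1 ≤ (s.map π).sum :=
  (valid_iff_multiset.1 hπ).2 s hs

theorem toFinsupp_mem_Pset_iff {s : Multiset ℝ} :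
    s.toFinsupp ∈ Pset f π ↔ s.sum ≡ f [PMOD 1] ∧ (s.map π).sum = 1 := by
  rw [Pset, Set.mem_ofPred, feasible_iff_sum_toMultiset_modEq, sum_support_mul_eq_sum_map,
    Multiset.toFinsupp_toMultiset]

theorem sum_map_eq_of_Eset_subset {π π' : ℝ → ℝ} (hπ : ∀ s : Multiset ℝ, π s.sum ≤ (s.map π).sum)
    (hπ' : π' 0 = 0) (hE : Eset π ⊆ Eset π') {s : Multiset ℝ} (hs : (s.map π).sum = π s.sum) :
    (s.map π').sum = π' s.sum := by
  induction s using Multiset.induction with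
  | empty => simp [hπ']
  | cons a t ih =>
    simp only [Multiset.map_cons, Multiset.sum_cons] at hs ⊢
    have hpair : π (a + t.sum) ≤ π a + π t.sum := by simpa using hπ {a, t.sum}
    have ht : (t.map π).sum = π t.sum := le_antisymm (by linarith [hπ t]) (hπ t)
    have hat : (a, t.sum) ∈ Eset π := show π a + π t.sum = π (a + t.sum) by linarith
    rw [ih ht]
    exact hE hat

theorem Valid.minimalValid_of_symmetric (hπ : Valid f π) (hsym : ∀ x, π x + π (f - x) = 1) :
    MinimalValid f π := by
  refine ⟨hπ, fun ⟨ψ, hψ, hle, hne⟩ => hne (funext fun x => ?_)⟩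
  have := hψ.one_le_sum_map (s := {x, f - x}) (by simp)
  simp only [Multiset.insert_eq_cons, Multiset.map_cons, Multiset.map_singleton,
    Multiset.sum_cons, Multiset.sum_singleton] at this
  linarith [hle x, hle (f - x), hsym x]

theorem sum_map_eq_one_of_Pset_subset {π' : ℝ → ℝ} (h : Pset f π ⊆ Pset f π') {s : Multiset ℝ}
    (hs : s.sum ≡ f [PMOD 1]) (h1 : (s.map π).sum = 1) : (s.map π').sum = 1 :=
  (toFinsupp_mem_Pset_iff.1 (h (toFinsupp_mem_Pset_iff.2 ⟨hs, h1⟩))).2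

namespace MinimalValid

theorem eq_of_le (hπ : MinimalValid f π) {π' : ℝ → ℝ} (hv : Valid f π') (hle : ∀ x, π' x ≤ π x) :
    π' = π :=
  not_not.1 fun hne => hπ.2 ⟨π', hv, hle, hne⟩

theorem le_of_forall_multiset (hπ : MinimalValid f π) {x c : ℝ} (hc : 0 ≤ c)
    (H : ∀ m : ℕ, 1 ≤ m → ∀ t : Multiset ℝ, t.sum + m • x ≡ f [PMOD 1] →
      1 ≤ m * c + (t.map π).sum) :
    π x ≤ c := by
  classical
  by_contra! hlt
  let lowered (u : ℝ) : Prop := u ≡ x [PMOD 1] ∧ c < π u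
  let π' (u : ℝ) : ℝ := if lowered u then c else π u
  have hle (u : ℝ) : π' u ≤ π u := by
    by_cases h : lowered u
    · simpa [π', h] using h.2.le
    · simp [π', h]
  have hvalid : Valid f π' := by
    refine valid_iff_multiset.2 ⟨fun u => ?_, fun s hs => ?_⟩
    · by_cases h : lowered u
      · simpa [π', h] using hc
      · simpa [π', h] using hπ.1.1 u
    rw [← Multiset.filter_add_not lowered s] at hs ⊢
    set t₁ := s.filter lowered
    set t₂ := s.filter (¬ lowered ·)
    have h₁ : (t₁.map π').sum = t₁.card * c := by
      rw [Multiset.map_congr rfl fun u hu => if_pos (Multiset.of_mem_filter hu : lowered u),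
        Multiset.map_const', Multiset.sum_replicate, nsmul_eq_mul]
    have h₂ : (t₂.map π').sum = (t₂.map π).sum := by
      refine congrArg Multiset.sum (Multiset.map_congr rfl fun u hu => ?_)
      exact if_neg (Multiset.of_mem_filter (p := (¬ lowered ·)) hu)
    have ht₁ : t₁.sum ≡ t₁.card • x [PMOD 1] :=
      Multiset.sum_modEq_card_nsmul fun u hu => (Multiset.of_mem_filter hu : lowered u).1
    rw [Multiset.map_add, Multiset.sum_add, h₁, h₂]
    rw [Multiset.sum_add, add_comm] at hs
    obtain h0 | hpos := Nat.eq_zero_or_pos t₁.card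
    · rw [Multiset.card_eq_zero.1 h0] at hs
      simpa [h0] using hπ.1.one_le_sum_map (by simpa using hs)
    · exact H _ hpos t₂ ((ht₁.add_left _).symm.trans hs)
  have := congrFun (hπ.eq_of_le hvalid hle) x
  simp only [π', lowered, modEq_rfl, hlt, and_self, if_true] at this
  exact hlt.ne this

theorem le_sum_map_of_modEq (hπ : MinimalValid f π) {s : Multiset ℝ} {x : ℝ}
    (hs : s.sum ≡ x [PMOD 1]) : π x ≤ (s.map π).sum := by
  refine hπ.le_of_forall_multiset (Multiset.sum_nonneg fun _ hu => ?_) fun m _ t ht => ?_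
  · obtain ⟨u, -, rfl⟩ := Multiset.mem_map.1 hu
    exact hπ.1.1 u
  have hfeas : (t + m • s).sum ≡ f [PMOD 1] := by
    rw [Multiset.sum_add, Multiset.sum_nsmul]
    exact (hs.nsmul.of_nsmul.add_left _).trans ht
  simpa [Multiset.map_nsmul, Multiset.sum_nsmul, add_comm] using hπ.1.one_le_sum_map hfeas

theorem map_sum_le (hπ : MinimalValid f π) (s : Multiset ℝ) : π s.sum ≤ (s.map π).sum :=
  hπ.le_sum_map_of_modEq modEq_rfl

theorem map_zero (hπ : MinimalValid f π) : π 0 = 0 :=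
  (by simpa using hπ.map_sum_le 0 : π 0 ≤ 0).antisymm (hπ.1.1 0)

theorem le_of_forall_nat (hπ : MinimalValid f π) {x c : ℝ} (hc : 0 ≤ c)
    (H : ∀ m : ℕ, 1 ≤ m → 1 ≤ m * c + π (f - m * x)) : π x ≤ c := by
  refine hπ.le_of_forall_multiset hc fun m hm t ht => (H m hm).trans ?_
  gcongr
  exact hπ.le_sum_map_of_modEq (by rwa [modEq_sub_iff_add_modEq, ← nsmul_eq_mul])

theorem map_le_one (hπ : MinimalValid f π) (x : ℝ) : π x ≤ 1 :=
  hπ.le_of_forall_nat zero_le_one fun m hm => by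
    have : (1 : ℝ) ≤ m := by exact_mod_cast hm
    linarith [hπ.1.1 (f - m * x)]

theorem map_eq_one_of_modEq (hπ : MinimalValid f π) {x : ℝ} (hx : x ≡ f [PMOD 1]) : π x = 1 :=
  (hπ.map_le_one x).antisymm (by simpa using hπ.1.one_le_sum_map (s := {x}) (by simpa using hx))

theorem one_le_map_add_nat_mul (hπ : MinimalValid f π) (x : ℝ) (k : ℕ) :
    1 ≤ π (f - k * x) + k * π x := by
  have := hπ.map_sum_le ((f - k * x) ::ₘ Multiset.replicate k x)
  rw [Multiset.sum_cons, Multiset.sum_replicate, nsmul_eq_mul, sub_add_cancel,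
    hπ.map_eq_one_of_modEq modEq_rfl] at this
  simpa using this

theorem nat_mul_le (hπ : MinimalValid f π) (x : ℝ) (k : ℕ) :
    k * π x ≤ k - 1 + π (f - k * (f - x)) := by
  have hf : π f = 1 := hπ.map_eq_one_of_modEq modEq_rfl
  obtain hk | hk2 := lt_or_ge k 2
  · interval_cases k <;> simp [hf]
  set Q := π (f - k * (f - x))
  have hk : (2 : ℝ) ≤ k := by exact_mod_cast hk2
  have hQ : 0 ≤ Q := hπ.1.1 _
  have hb : π x ≤ (k - 1 + Q) / k := by
    refine hπ.le_of_forall_nat (div_nonneg (by linarith) (by linarith)) fun m hm => ?_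
    rw [mul_div_assoc', div_add' _ _ _ (by positivity), le_div_iff₀ (by positivity)]
    obtain rfl | hm := hm.eq_or_lt
    · rw [Nat.cast_one, one_mul, one_mul, one_mul]
      linarith [hπ.one_le_map_add_nat_mul (f - x) k]
    · have hm : (2 : ℝ) ≤ m := by exact_mod_cast hm
      nlinarith [hπ.1.1 (f - m * x)]
  rwa [le_div_iff₀ (by positivity), mul_comm] at hb

theorem map_add_map_sub_eq_one (hπ : MinimalValid f π) (x : ℝ) : π x + π (f - x) = 1 := by
  refine le_antisymm ?_ (by simpa using hπ.1.one_le_sum_map (s := {x, f - x}) (by simp))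
  have hc : 0 ≤ 1 - π x := sub_nonneg.2 (hπ.map_le_one x)
  have := hπ.le_of_forall_nat hc fun m _ => by linarith [hπ.nat_mul_le x m]
  linarith

theorem Pset_subset_of_Eset_subset (hπ : MinimalValid f π) {π' : ℝ → ℝ} (hπ' : MinimalValid f π')
    (hE : Eset π ⊆ Eset π') : Pset f π ⊆ Pset f π' := by
  classical
  intro y hy
  rw [← Finsupp.toMultiset_toFinsupp y, toFinsupp_mem_Pset_iff] at hy ⊢
  obtain ⟨hs, h1⟩ := hy
  refine ⟨hs, ?_⟩
  rw [sum_map_eq_of_Eset_subset hπ.map_sum_le hπ'.map_zero hE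
    (h1.trans (hπ.map_eq_one_of_modEq hs).symm), hπ'.map_eq_one_of_modEq hs]

theorem symmetric_of_Pset_subset (hπ : MinimalValid f π) {π' : ℝ → ℝ} (h : Pset f π ⊆ Pset f π')
    (x : ℝ) : π' x + π' (f - x) = 1 := by
  simpa using sum_map_eq_one_of_Pset_subset h (s := {x, f - x}) (by simp)
    (by simpa using hπ.map_add_map_sub_eq_one x)

theorem Eset_subset_of_Pset_subset (hπ : MinimalValid f π) {π' : ℝ → ℝ}
    (h : Pset f π ⊆ Pset f π') : Eset π ⊆ Eset π' := by
  rintro ⟨u, v⟩ (huv : π u + π v = π (u + v))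
  have huvw := sum_map_eq_one_of_Pset_subset h (s := {u, v, f - (u + v)})
    (by simp [← add_assoc])
    (by simpa [← add_assoc, huv] using hπ.map_add_map_sub_eq_one (u + v))
  simp only [Multiset.insert_eq_cons, Multiset.map_cons, Multiset.map_singleton,
    Multiset.sum_cons, Multiset.sum_singleton] at huvw
  show π' u + π' v = π' (u + v)
  linarith [hπ.symmetric_of_Pset_subset h (u + v)]

end MinimalValid

end

theorem stmt1_general (f : ℝ) (π : ℝ → ℝ)
    (hπ : MinimalValid f π) :
    IsFacet f π ↔ ∀ π' : ℝ → ℝ, MinimalValid f π' → Eset π ⊆ Eset π' → π' = π :=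
  ⟨fun hfacet π' hπ' hE => hfacet.2 π' hπ'.1 (hπ.Pset_subset_of_Eset_subset hπ' hE),
    fun H => ⟨hπ.1, fun π' hπ' hP => H π' (hπ'.minimalValid_of_symmetric
      (hπ.symmetric_of_Pset_subset hP)) (hπ.Eset_subset_of_Pset_subset hP)⟩⟩

theorem stmt1 (f : ℝ) (hf : f ∈ Set.Ioo (0 : ℝ) 1) (π : ℝ → ℝ)
    (hπ : MinimalValid f π) :
    IsFacet f π ↔ ∀ π' : ℝ → ℝ, MinimalValid f π' → Eset π ⊆ Eset π' → π' = π :=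
  stmt1_general f π hπ
end

section
/- Let π and π' be minimal valid functions. Then E(π) ⊆ E(π') if and only if P(π) ⊆ P(π'). -/
/-!
Minimality forces `π` to be subadditive, to vanish on `ℤ` (hence to be `ℤ`-periodic), to be at
most `1` and to be symmetric, `π x + π (f - x) = 1`: otherwise `π` could be lowered at a single
point and remain valid. For feasible `y`, subadditivity gives
`1 = π (∑ r y(r)) ≤ ∑ π(r) y(r)`, so `y ∈ P(π)` exactly when adding up `y` one point at a time
only passes through pairs of `E(π)`; this transfers to `π'` when `E(π) ⊆ E(π')`. Conversely, for
`(a, b) ∈ E(π)` and `c = f - a - b`, symmetry puts both `{a, b, c}` and `{a + b, c}` into `P(π)`,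
and comparing their `π'`-values gives `π' a + π' b = π' (a + b)`.
-/

open Finsupp

def weightedSum (g : ℝ → ℝ) (y : ℝ →₀ ℕ) : ℝ := y.sum fun r n => g r * n

section weightedSum

variable (g : ℝ → ℝ)

@[simp]
lemma weightedSum_add (y₁ y₂ : ℝ →₀ ℕ) :
    weightedSum g (y₁ + y₂) = weightedSum g y₁ + weightedSum g y₂ :=
  sum_add_index' (fun _ => by simp) (fun _ _ _ => by push_cast; ring)

@[simp]
lemma weightedSum_single (r : ℝ) (n : ℕ) : weightedSum g (single r n) = g r * n :=
  sum_single_index (by simp)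

lemma weightedSum_erase_add (y : ℝ →₀ ℕ) (x : ℝ) :
    weightedSum g y = weightedSum g (y.erase x) + g x * y x := by
  conv_lhs => rw [← erase_add_single x y]
  rw [weightedSum_add, weightedSum_single]

lemma weightedSum_nonneg {g : ℝ → ℝ} (hg : ∀ x, 0 ≤ g x) (y : ℝ →₀ ℕ) : 0 ≤ weightedSum g y :=
  Finset.sum_nonneg fun r _ => mul_nonneg (hg r) (Nat.cast_nonneg _)

lemma weightedSum_eq_sum_map_toMultiset (y : ℝ →₀ ℕ) :
    weightedSum g y = ((toMultiset y).map g).sum := by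
  rw [toMultiset_map, sum_toMultiset,
    sum_mapDomain_index (h := fun a n => n • a) (fun _ => zero_nsmul _) fun _ _ _ => add_nsmul _ _ _]
  simp [weightedSum, mul_comm]

lemma weightedSum_id_eq_sum_toMultiset (y : ℝ →₀ ℕ) :
    weightedSum id y = (toMultiset y).sum := by
  simp [weightedSum_eq_sum_map_toMultiset]

end weightedSum

lemma feasible_iff {f : ℝ} {y : ℝ →₀ ℕ} : Feasible f y ↔ ∃ z : ℤ, weightedSum id y - f = z :=
  Iff.rfl

lemma mem_Pset_iff {f : ℝ} {π : ℝ → ℝ} {y : ℝ →₀ ℕ} :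
    y ∈ Pset f π ↔ Feasible f y ∧ weightedSum π y = 1 :=
  Iff.rfl

lemma Multiset.apply_sum_eq_sum_map_of_tight {M : Type*} [AddCommMonoid M] {g g' : M → ℝ}
    (hg0 : g 0 = 0) (hg : ∀ a b, g (a + b) ≤ g a + g b)
    (hgg' : ∀ a b, g a + g b = g (a + b) → g' a + g' b = g' (a + b))
    {s : Multiset M} (hs : g s.sum = (s.map g).sum) : g' s.sum = (s.map g').sum := by
  induction s using Multiset.induction_on with
  | empty => simpa using hgg' 0 0 (by simp [hg0])
  | cons a t ih =>
    simp only [Multiset.sum_cons, Multiset.map_cons] at hs ⊢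
    have hat := hg a t.sum
    have ht := Multiset.le_sum_of_subadditive g hg0.le hg t
    rw [← ih (by linarith), hgg' a t.sum (by linarith)]

section MinimalValid

variable {f : ℝ} {π : ℝ → ℝ}

lemma Valid.one_le_weightedSum (hπ : Valid f π) {y : ℝ →₀ ℕ} (hy : Feasible f y) :
    1 ≤ weightedSum π y :=
  hπ.2 y hy

lemma Valid.update (hπ : Valid f π) {x v : ℝ} (hv : 0 ≤ v)
    (h : ∀ y, Feasible f y → y x ≠ 0 → 1 ≤ weightedSum π (y.erase x) + v * y x) :
    Valid f (Function.update π x v) := by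
  refine ⟨fun t => ?_, fun y hy => ?_⟩
  · rcases eq_or_ne t x with rfl | ht
    · simpa using hv
    · simpa [ht] using hπ.1 t
  · have hrest : weightedSum (Function.update π x v) (y.erase x) = weightedSum π (y.erase x) :=
      Finset.sum_congr rfl fun r hr => by
        rw [support_erase] at hr
        simp only [Function.update_of_ne (Finset.ne_of_mem_erase hr)]
    change 1 ≤ weightedSum _ y
    rw [weightedSum_erase_add _ y x, hrest, Function.update_self]
    by_cases hx : y x = 0
    · simpa [← weightedSum_erase_add, hx] using hπ.one_le_weightedSum hy
    · exact h y hy hx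

lemma MinimalValid.apply_le_of_forall_feasible (hπ : MinimalValid f π) {x v : ℝ} (hv : 0 ≤ v)
    (h : ∀ y, Feasible f y → y x ≠ 0 → 1 ≤ weightedSum π (y.erase x) + v * y x) :
    π x ≤ v := by
  by_contra! hlt
  refine hπ.2 ⟨_, hπ.1.update hv h, fun t => ?_, fun heq => ?_⟩
  · rcases eq_or_ne t x with rfl | ht
    · simpa using hlt.le
    · simp [ht]
  · simpa [hlt.ne] using congrFun heq x

lemma MinimalValid.le_one (hπ : MinimalValid f π) (x : ℝ) : π x ≤ 1 :=
  hπ.apply_le_of_forall_feasible zero_le_one fun y _ hx => by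
    have hm : (1 : ℝ) ≤ y x := by exact_mod_cast Nat.one_le_iff_ne_zero.2 hx
    linarith [weightedSum_nonneg hπ.1.1 (y.erase x)]

lemma MinimalValid.apply_intCast (hπ : MinimalValid f π) (z : ℤ) : π z = 0 := by
  refine le_antisymm (hπ.apply_le_of_forall_feasible le_rfl fun y hy _ => ?_) (hπ.1.1 _)
  obtain ⟨w, hw⟩ := feasible_iff.1 hy
  have hfeas : Feasible f (y.erase z) := by
    refine feasible_iff.2 ⟨w - z * y z, ?_⟩
    have := weightedSum_erase_add id y z
    push_cast
    simp only [id] at this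
    linarith
  simpa using hπ.1.one_le_weightedSum hfeas

lemma MinimalValid.apply_zero (hπ : MinimalValid f π) : π 0 = 0 := by
  simpa using hπ.apply_intCast 0

lemma MinimalValid.apply_add_le (hπ : MinimalValid f π) (a b : ℝ) : π (a + b) ≤ π a + π b := by
  refine hπ.apply_le_of_forall_feasible (add_nonneg (hπ.1.1 a) (hπ.1.1 b)) fun y hy _ => ?_
  obtain ⟨w, hw⟩ := feasible_iff.1 hy
  set m := y (a + b)
  have hfeas : Feasible f (y.erase (a + b) + single a m + single b m) := by
    refine feasible_iff.2 ⟨w, ?_⟩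
    have := weightedSum_erase_add id y (a + b)
    simp only [weightedSum_add, weightedSum_single, id] at this ⊢
    linarith
  have := hπ.1.one_le_weightedSum hfeas
  simp only [weightedSum_add, weightedSum_single] at this
  linarith

lemma MinimalValid.apply_add_intCast (hπ : MinimalValid f π) (x : ℝ) (z : ℤ) :
    π (x + z) = π x := by
  have h₁ := hπ.apply_add_le x z
  have h₂ := hπ.apply_add_le (x + z) (-z : ℤ)
  rw [hπ.apply_intCast] at h₁ h₂
  push_cast at h₂
  simp only [add_neg_cancel_right] at h₂
  linarith

lemma MinimalValid.apply_weightedSum_id_le (hπ : MinimalValid f π) (y : ℝ →₀ ℕ) :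
    π (weightedSum id y) ≤ weightedSum π y := by
  rw [weightedSum_id_eq_sum_toMultiset, weightedSum_eq_sum_map_toMultiset]
  exact Multiset.le_sum_of_subadditive π hπ.apply_zero.le hπ.apply_add_le _

lemma MinimalValid.apply_weightedSum_id_eq_one (hπ : MinimalValid f π) {y : ℝ →₀ ℕ}
    (hy : Feasible f y) : π (weightedSum id y) = 1 := by
  have hsingle : Feasible f (single (weightedSum id y) 1) := by simpa [feasible_iff] using hy
  refine le_antisymm (hπ.le_one _) ?_
  simpa using hπ.1.one_le_weightedSum hsingle

lemma MinimalValid.apply_add_apply_sub_le_weightedSum (hπ : MinimalValid f π) {x : ℝ}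
    {y : ℝ →₀ ℕ} (hy : Feasible f y) (hx : y x ≠ 0) :
    π x + π (f - x) ≤ weightedSum π y := by
  obtain ⟨y₁, rfl⟩ : ∃ y₁, y = y₁ + single x 1 :=
    ⟨y - single x 1, (tsub_add_cancel_of_le (single_le_iff.2 (Nat.one_le_iff_ne_zero.2 hx))).symm⟩
  obtain ⟨z, hz⟩ := feasible_iff.1 hy
  have hsum : weightedSum id y₁ = f - x + z := by
    simp only [weightedSum_add, weightedSum_single, id, Nat.cast_one, mul_one] at hz
    linarith
  calc π x + π (f - x) = π x + π (weightedSum id y₁) := by rw [hsum, hπ.apply_add_intCast]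
    _ ≤ π x + weightedSum π y₁ := by gcongr; exact hπ.apply_weightedSum_id_le y₁
    _ = weightedSum π (y₁ + single x 1) := by
      simp only [weightedSum_add, weightedSum_single, Nat.cast_one, mul_one, add_comm]

lemma MinimalValid.apply_add_apply_sub (hπ : MinimalValid f π) (x : ℝ) :
    π x + π (f - x) = 1 := by
  refine le_antisymm ?_ ?_
  · by_contra! hlt
    set ε := π x + π (f - x) - 1
    have hε : 0 < ε := by linarith
    have hεx : ε ≤ π x := by linarith [hπ.le_one (f - x)]
    have hε1 : ε ≤ 1 := by linarith [hπ.le_one x, hπ.1.1 (f - x)]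
    -- Lowering `π x` by `ε ^ 2 / 2` costs at most `ε` while `y x ≤ 2 / ε`;
    -- beyond that, the `y x` copies of `x` alone contribute more than `1`.
    have hlow := hπ.apply_le_of_forall_feasible (x := x) (v := π x - ε ^ 2 / 2) (by nlinarith)
      fun y hy hx => by
        have hkey := hπ.apply_add_apply_sub_le_weightedSum hy hx
        rw [weightedSum_erase_add π y x] at hkey
        have hrest := weightedSum_nonneg hπ.1.1 (y.erase x)
        have hm : (1 : ℝ) ≤ y x := by exact_mod_cast Nat.one_le_iff_ne_zero.2 hx
        rcases le_or_gt ((y x : ℝ) * ε) 2 with hsmall | hlarge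
        · nlinarith
        · nlinarith
    nlinarith
  · have hfeas : Feasible f (single x 1 + single (f - x) 1) := feasible_iff.2 ⟨0, by simp⟩
    simpa using hπ.1.one_le_weightedSum hfeas

lemma MinimalValid.weightedSum_eq_of_Eset_subset {π' : ℝ → ℝ} (hπ : MinimalValid f π)
    (hE : Eset π ⊆ Eset π') {y : ℝ →₀ ℕ} (hy : π (weightedSum id y) = weightedSum π y) :
    π' (weightedSum id y) = weightedSum π' y := by
  rw [weightedSum_id_eq_sum_toMultiset, weightedSum_eq_sum_map_toMultiset] at hy ⊢
  exact Multiset.apply_sum_eq_sum_map_of_tight hπ.apply_zero hπ.apply_add_le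
    (fun a b h => hE (show (a, b) ∈ Eset π from h)) hy

end MinimalValid

theorem stmt2_general (f : ℝ) (π π' : ℝ → ℝ)
    (hπ : MinimalValid f π) (hπ' : MinimalValid f π') :
    Eset π ⊆ Eset π' ↔ Pset f π ⊆ Pset f π' := by
  constructor
  · rintro hE y ⟨hy, hπy⟩
    have htight : π (weightedSum id y) = weightedSum π y :=
      (hπ.apply_weightedSum_id_eq_one hy).trans hπy.symm
    refine ⟨hy, ?_⟩
    change weightedSum π' y = 1
    rw [← hπ.weightedSum_eq_of_Eset_subset hE htight, hπ'.apply_weightedSum_id_eq_one hy]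
  · rintro hP ⟨a, b⟩ (hab : π a + π b = π (a + b))
    have hsymm := hπ.apply_add_apply_sub (a + b)
    set c := f - (a + b)
    have h₃ : single a 1 + single b 1 + single c 1 ∈ Pset f π' :=
      hP (mem_Pset_iff.2 ⟨feasible_iff.2 ⟨0, by simp [c]⟩, by
        simp only [weightedSum_add, weightedSum_single, Nat.cast_one, mul_one]; linarith⟩)
    have h₂ : single (a + b) 1 + single c 1 ∈ Pset f π' :=
      hP (mem_Pset_iff.2 ⟨feasible_iff.2 ⟨0, by simp [c]⟩, by
        simp only [weightedSum_add, weightedSum_single, Nat.cast_one, mul_one]; linarith⟩)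
    simp only [mem_Pset_iff, weightedSum_add, weightedSum_single, Nat.cast_one, mul_one] at h₂ h₃
    show π' a + π' b = π' (a + b)
    linarith

theorem stmt2 (f : ℝ) (hf : f ∈ Set.Ioo (0 : ℝ) 1) (π π' : ℝ → ℝ)
    (hπ : MinimalValid f π) (hπ' : MinimalValid f π') :
    Eset π ⊆ Eset π' ↔ Pset f π ⊆ Pset f π' :=
  stmt2_general f π π' hπ hπ'
end
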